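/- Let Γ be a graph with vertex set X and edge set E(Γ). Let x_1,…,x_l, y_1,…,y_l ∈ X and k ∈ {1,…,l} be such that x_1x_2⋯x_l = y_1y_2⋯y_l in M(Γ), y_k = x_1, and y_i ≠ x_1 for all i = 1,…,k−1. Then {y_i, x_1} ∈ E(Γ) for all i = 1,…,k−1. -/

import Mathlib

/-! Common definitions: surface braid groups, singular braid monoids, graph monoids. -/

/-- `prodAsc f i j = f i * f (i+1) * ⋯ * f j` (equal to `1` when `j < i`). -/
def prodAsc {M : Type*} [Monoid M] (f : ℕ → M) (i j : ℕ) : M :=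
  ((List.range' i (j + 1 - i)).map f).prod

/-- `prodDesc f i j = f i * f (i-1) * ⋯ * f j` (equal to `1` when `i < j`). -/
def prodDesc {M : Type*} [Monoid M] (f : ℕ → M) (i j : ℕ) : M :=
  (((List.range' j (i + 1 - j)).map f).reverse).prod

/-- Generators of the braid group `B_n(M)` of a closed oriented surface of genus `g`:
`σ_1, …, σ_{n-1}` and `a_1, …, a_{2g}` (`s ⟨i-1, _⟩` encodes `σ_i`, `a ⟨k-1, _⟩` encodes `a_k`). -/
inductive BGen (n g : ℕ) : Type
  | s : Fin (n - 1) → BGen n g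
  | a : Fin (2 * g) → BGen n g

/-- The word `σ_i` (1-based index) in the free group. -/
def bS (n g : ℕ) (i : ℕ) : FreeGroup (BGen n g) :=
  if h : i - 1 < n - 1 then FreeGroup.of (BGen.s ⟨i - 1, h⟩) else 1

/-- The word `a_k` (1-based index) in the free group. -/
def bA (n g : ℕ) (k : ℕ) : FreeGroup (BGen n g) :=
  if h : k - 1 < 2 * g then FreeGroup.of (BGen.a ⟨k - 1, h⟩) else 1

/-- The word `A_{2r} = σ_1⁻¹ (a_1 ⋯ a_{r-1} a_{r+1}⁻¹ ⋯ a_{2g}⁻¹) σ_1⁻¹`. -/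
def bA2 (n g : ℕ) (r : ℕ) : FreeGroup (BGen n g) :=
  (bS n g 1)⁻¹ * prodAsc (bA n g) 1 (r - 1) *
    prodAsc (fun k => (bA n g k)⁻¹) (r + 1) (2 * g) * (bS n g 1)⁻¹

/-- The relators (R1)–(R6) of the braid group of a closed oriented surface of genus `g`. -/
def Brel (n g : ℕ) : Set (FreeGroup (BGen n g)) :=
  { w |
    -- (R1)
    (∃ i j, 1 ≤ i ∧ i ≤ n - 1 ∧ 1 ≤ j ∧ j ≤ n - 1 ∧ (i + 2 ≤ j ∨ j + 2 ≤ i) ∧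
      w = bS n g i * bS n g j * (bS n g j * bS n g i)⁻¹) ∨
    -- (R2)
    (∃ i, 1 ≤ i ∧ i + 1 ≤ n - 1 ∧
      w = bS n g i * bS n g (i + 1) * bS n g i *
        (bS n g (i + 1) * bS n g i * bS n g (i + 1))⁻¹) ∨
    -- (R3)
    (w = prodAsc (bA n g) 1 (2 * g) * prodAsc (fun k => (bA n g k)⁻¹) 1 (2 * g) *
      (prodAsc (bS n g) 1 (n - 2) * (bS n g (n - 1)) ^ 2 * prodDesc (bS n g) (n - 2) 1)⁻¹) ∨
    -- (R4)
    (∃ r s, 1 ≤ r ∧ r ≤ 2 * g ∧ 1 ≤ s ∧ s ≤ 2 * g ∧ r ≠ s ∧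
      w = bA n g r * bA2 n g s * (bA2 n g s * bA n g r)⁻¹) ∨
    -- (R5)
    (∃ r, 1 ≤ r ∧ r ≤ 2 * g ∧
      w = prodAsc (bA n g) 1 r * bA2 n g r *
        ((bS n g 1) ^ 2 * bA2 n g r * prodAsc (bA n g) 1 r)⁻¹) ∨
    -- (R6)
    (∃ r i, 1 ≤ r ∧ r ≤ 2 * g ∧ 2 ≤ i ∧ i ≤ n - 1 ∧
      w = bA n g r * bS n g i * (bS n g i * bA n g r)⁻¹) }

/-- The braid group `B_n(M)` of the closed oriented surface `M` of genus `g`. -/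
abbrev SurfBraidGroup (n g : ℕ) := PresentedGroup (Brel n g)

/-- The canonical projection from the free group onto `B_n(M)`. -/
def bmk (n g : ℕ) : FreeGroup (BGen n g) →* SurfBraidGroup n g := PresentedGroup.mk (Brel n g)

/-- The generator `σ_i` of `B_n(M)` (1-based index). -/
def Bσ (n g : ℕ) (i : ℕ) : SurfBraidGroup n g := bmk n g (bS n g i)

/-- The generator `a_k` of `B_n(M)` (1-based index). -/
def Ba (n g : ℕ) (k : ℕ) : SurfBraidGroup n g := bmk n g (bA n g k)

/-- `T_{i j} = σ_i ⋯ σ_{j-2} σ_{j-1}² σ_{j-2}⁻¹ ⋯ σ_i⁻¹` in `B_n(M)`. -/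
def bT (n g : ℕ) (i j : ℕ) : SurfBraidGroup n g :=
  bmk n g (prodAsc (bS n g) i (j - 2) * (bS n g (j - 1)) ^ 2 * (prodAsc (bS n g) i (j - 2))⁻¹)

/-- The set `Υ = {β σ_i² β⁻¹ : β ∈ B_n(M), 1 ≤ i ≤ n-1}`. -/
def Ups (n g : ℕ) : Set (SurfBraidGroup n g) :=
  { x | ∃ β : SurfBraidGroup n g, ∃ i : ℕ, 1 ≤ i ∧ i ≤ n - 1 ∧ x = β * (Bσ n g i) ^ 2 * β⁻¹ }

/-- The subgroup `K_n(M)` of `B_n(M)` generated by `Υ`. -/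
def Ksub (n g : ℕ) : Subgroup (SurfBraidGroup n g) := Subgroup.closure (Ups n g)

/-- `θ : B_n(M) → Sym_n` is the standard epimorphism: `θ(σ_i) = (i, i+1)` and `θ(a_k) = 1`
(points of `{1, …, n}` are encoded 0-based in `Fin n`). -/
def IsTheta (n g : ℕ) (θ : SurfBraidGroup n g →* Equiv.Perm (Fin n)) : Prop :=
  (∀ i : ℕ, ∀ _h1 : 1 ≤ i, ∀ _h2 : i ≤ n - 1,
    θ (Bσ n g i) = Equiv.swap ⟨i - 1, by omega⟩ ⟨i, by omega⟩) ∧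
  (∀ k : ℕ, 1 ≤ k → k ≤ 2 * g → θ (Ba n g k) = 1)

/-- The set `Υ_{i j} = {β T_{i j} β⁻¹ : β ∈ PB_n(M)}`, where `PB_n(M) = ker θ`. -/
def UpsIJ (n g : ℕ) (θ : SurfBraidGroup n g →* Equiv.Perm (Fin n)) (i j : ℕ) :
    Set (SurfBraidGroup n g) :=
  { x | ∃ β ∈ θ.ker, x = β * bT n g i j * β⁻¹ }

/-! ### Graph monoids -/

/-- The congruence on the free monoid over the vertex set generated by the relations
`xy = yx` for edges `{x, y}` of the graph (edge relation `E`). -/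
def graphCon {X : Type*} (E : X → X → Prop) : Con (FreeMonoid X) :=
  conGen (fun w₁ w₂ => ∃ x y, E x y ∧ w₁ = FreeMonoid.of x * FreeMonoid.of y ∧
    w₂ = FreeMonoid.of y * FreeMonoid.of x)

/-- The graph monoid `M(Γ)` of a graph with vertex set `X` and edge relation `E`. -/
abbrev GraphMonoid {X : Type*} (E : X → X → Prop) := (graphCon E).Quotient

/-- The vertex `x`, viewed as an element of the graph monoid. -/
def gvert {X : Type*} (E : X → X → Prop) (x : X) : GraphMonoid E :=
  (graphCon E).mk' (FreeMonoid.of x)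

/-- The edge relation of the commutation graph on a subset `S` of a monoid:
`{u, v}` is an edge iff `u ≠ v` and `uv = vu`. -/
def commE {G : Type*} [Monoid G] (S : Set G) (u v : ↥S) : Prop :=
  u ≠ v ∧ (u : G) * v = v * u

/-! ### The singular braid monoid -/

/-- Generators of the singular braid monoid: `σ_i^{±1}`, `a_k^{±1}`, `τ_i` (1-based encoding
as in `BGen`). -/
inductive SGen (n g : ℕ) : Type
  | sp : Fin (n - 1) → SGen n g
  | sm : Fin (n - 1) → SGen n g
  | ap : Fin (2 * g) → SGen n g
  | am : Fin (2 * g) → SGen n g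
  | t : Fin (n - 1) → SGen n g

/-- The letter `σ_i`. -/
def mSp (n g : ℕ) (i : ℕ) : FreeMonoid (SGen n g) :=
  if h : i - 1 < n - 1 then FreeMonoid.of (SGen.sp ⟨i - 1, h⟩) else 1

/-- The letter `σ_i⁻¹`. -/
def mSm (n g : ℕ) (i : ℕ) : FreeMonoid (SGen n g) :=
  if h : i - 1 < n - 1 then FreeMonoid.of (SGen.sm ⟨i - 1, h⟩) else 1

/-- The letter `a_k`. -/
def mAp (n g : ℕ) (k : ℕ) : FreeMonoid (SGen n g) :=
  if h : k - 1 < 2 * g then FreeMonoid.of (SGen.ap ⟨k - 1, h⟩) else 1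

/-- The letter `a_k⁻¹`. -/
def mAm (n g : ℕ) (k : ℕ) : FreeMonoid (SGen n g) :=
  if h : k - 1 < 2 * g then FreeMonoid.of (SGen.am ⟨k - 1, h⟩) else 1

/-- The letter `τ_i`. -/
def mT (n g : ℕ) (i : ℕ) : FreeMonoid (SGen n g) :=
  if h : i - 1 < n - 1 then FreeMonoid.of (SGen.t ⟨i - 1, h⟩) else 1

/-- The word `A_{2r}` in the singular braid generators. -/
def mA2 (n g : ℕ) (r : ℕ) : FreeMonoid (SGen n g) :=
  mSm n g 1 * prodAsc (mAp n g) 1 (r - 1) * prodAsc (mAm n g) (r + 1) (2 * g) * mSm n g 1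

/-- The word `a_{i r}`: `(σ_{i-1}⁻¹ ⋯ σ_1⁻¹) a_r (σ_1⁻¹ ⋯ σ_{i-1}⁻¹)` for odd `r`, and
`(σ_{i-1} ⋯ σ_1) a_r (σ_1 ⋯ σ_{i-1})` for even `r`. -/
def mair (n g : ℕ) (i r : ℕ) : FreeMonoid (SGen n g) :=
  if r % 2 = 1 then prodDesc (mSm n g) (i - 1) 1 * mAp n g r * prodAsc (mSm n g) 1 (i - 1)
  else prodDesc (mSp n g) (i - 1) 1 * mAp n g r * prodAsc (mSp n g) 1 (i - 1)

/-- The word representing `a_{i r}⁻¹`. -/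
def mairInv (n g : ℕ) (i r : ℕ) : FreeMonoid (SGen n g) :=
  if r % 2 = 1 then prodDesc (mSp n g) (i - 1) 1 * mAm n g r * prodAsc (mSp n g) 1 (i - 1)
  else prodDesc (mSm n g) (i - 1) 1 * mAm n g r * prodAsc (mSm n g) 1 (i - 1)

/-- The defining relations (R0)–(R12) of the singular braid monoid `SB_n(M)`. -/
def SBrel (n g : ℕ) : FreeMonoid (SGen n g) → FreeMonoid (SGen n g) → Prop := fun w₁ w₂ =>
  -- (R0)
  (∃ i, 1 ≤ i ∧ i ≤ n - 1 ∧
    (w₁ = mSp n g i * mSm n g i ∨ w₁ = mSm n g i * mSp n g i) ∧ w₂ = 1) ∨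
  (∃ k, 1 ≤ k ∧ k ≤ 2 * g ∧
    (w₁ = mAp n g k * mAm n g k ∨ w₁ = mAm n g k * mAp n g k) ∧ w₂ = 1) ∨
  -- (R1)
  (∃ i j, 1 ≤ i ∧ i ≤ n - 1 ∧ 1 ≤ j ∧ j ≤ n - 1 ∧ (i + 2 ≤ j ∨ j + 2 ≤ i) ∧
    w₁ = mSp n g i * mSp n g j ∧ w₂ = mSp n g j * mSp n g i) ∨
  -- (R2)
  (∃ i, 1 ≤ i ∧ i + 1 ≤ n - 1 ∧
    w₁ = mSp n g i * mSp n g (i + 1) * mSp n g i ∧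
    w₂ = mSp n g (i + 1) * mSp n g i * mSp n g (i + 1)) ∨
  -- (R3)
  (w₁ = prodAsc (mAp n g) 1 (2 * g) * prodAsc (mAm n g) 1 (2 * g) ∧
    w₂ = prodAsc (mSp n g) 1 (n - 2) * mSp n g (n - 1) * mSp n g (n - 1) *
      prodDesc (mSp n g) (n - 2) 1) ∨
  -- (R4)
  (∃ r s, 1 ≤ r ∧ r ≤ 2 * g ∧ 1 ≤ s ∧ s ≤ 2 * g ∧ r ≠ s ∧
    w₁ = mAp n g r * mA2 n g s ∧ w₂ = mA2 n g s * mAp n g r) ∨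
  -- (R5)
  (∃ r, 1 ≤ r ∧ r ≤ 2 * g ∧
    w₁ = prodAsc (mAp n g) 1 r * mA2 n g r ∧
    w₂ = mSp n g 1 * mSp n g 1 * mA2 n g r * prodAsc (mAp n g) 1 r) ∨
  -- (R6)
  (∃ r i, 1 ≤ r ∧ r ≤ 2 * g ∧ 2 ≤ i ∧ i ≤ n - 1 ∧
    w₁ = mAp n g r * mSp n g i ∧ w₂ = mSp n g i * mAp n g r) ∨
  -- (R7)
  (∃ i j, 1 ≤ i ∧ i ≤ n - 1 ∧ 1 ≤ j ∧ j ≤ n - 1 ∧ (i + 2 ≤ j ∨ j + 2 ≤ i) ∧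
    w₁ = mSp n g i * mT n g j ∧ w₂ = mT n g j * mSp n g i) ∨
  -- (R8)
  (∃ i j, 1 ≤ i ∧ i ≤ n - 1 ∧ 1 ≤ j ∧ j ≤ n - 1 ∧ (i + 2 ≤ j ∨ j + 2 ≤ i) ∧
    w₁ = mT n g i * mT n g j ∧ w₂ = mT n g j * mT n g i) ∨
  -- (R9)
  (∃ i, 1 ≤ i ∧ i ≤ n - 1 ∧
    w₁ = mSp n g i * mT n g i ∧ w₂ = mT n g i * mSp n g i) ∨
  -- (R10)
  (∃ i j, 1 ≤ i ∧ i ≤ n - 1 ∧ 1 ≤ j ∧ j ≤ n - 1 ∧ (i + 1 = j ∨ j + 1 = i) ∧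
    w₁ = mSp n g i * mSp n g j * mT n g i ∧ w₂ = mT n g j * mSp n g i * mSp n g j) ∨
  -- (R11)
  (∃ i r, 1 ≤ i ∧ i ≤ n - 1 ∧ 1 ≤ r ∧ r ≤ 2 * g ∧
    w₁ = mair n g i r * mair n g (i + 1) r * mT n g i *
      (mairInv n g (i + 1) r * mairInv n g i r) ∧
    w₂ = mT n g i) ∨
  -- (R12)
  (∃ i j r, 1 ≤ i ∧ i ≤ n - 1 ∧ 1 ≤ j ∧ j ≤ n ∧ j ≠ i ∧ j ≠ i + 1 ∧ 1 ≤ r ∧ r ≤ 2 * g ∧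
    w₁ = mT n g i * mair n g j r ∧ w₂ = mair n g j r * mT n g i)

/-- The singular braid monoid `SB_n(M)`. -/
abbrev SingBraidMonoid (n g : ℕ) := (conGen (SBrel n g)).Quotient

/-- The canonical projection from the free monoid onto `SB_n(M)`. -/
def smk (n g : ℕ) : FreeMonoid (SGen n g) →* SingBraidMonoid n g := Con.mk' _

/-- The generator `σ_i` of `SB_n(M)`. -/
def sσ (n g : ℕ) (i : ℕ) : SingBraidMonoid n g := smk n g (mSp n g i)

/-- The generator `σ_i⁻¹` of `SB_n(M)`. -/
def sσi (n g : ℕ) (i : ℕ) : SingBraidMonoid n g := smk n g (mSm n g i)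

/-- The generator `a_k` of `SB_n(M)`. -/
def sa (n g : ℕ) (k : ℕ) : SingBraidMonoid n g := smk n g (mAp n g k)

/-- The generator `a_k⁻¹` of `SB_n(M)`. -/
def sai (n g : ℕ) (k : ℕ) : SingBraidMonoid n g := smk n g (mAm n g k)

/-- The generator `τ_i` of `SB_n(M)`. -/
def sτ (n g : ℕ) (i : ℕ) : SingBraidMonoid n g := smk n g (mT n g i)

/-- `δ_i = σ_i τ_i` in `SB_n(M)`. -/
def sδ (n g : ℕ) (i : ℕ) : SingBraidMonoid n g := sσ n g i * sτ n g i

/-- `ι : B_n(M) → SB_n(M)` is the canonical monoid homomorphism sending `σ_i^{±1}` to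
`σ_i^{±1}` and `a_k^{±1}` to `a_k^{±1}`. -/
def IsIota (n g : ℕ) (ι : SurfBraidGroup n g →* SingBraidMonoid n g) : Prop :=
  (∀ i, 1 ≤ i → i ≤ n - 1 → ι (Bσ n g i) = sσ n g i ∧ ι ((Bσ n g i)⁻¹) = sσi n g i) ∧
  (∀ k, 1 ≤ k → k ≤ 2 * g → ι (Ba n g k) = sa n g k ∧ ι ((Ba n g k)⁻¹) = sai n g k)

/-- The set `Υ̂ = {ι(α) δ_i ι(α)⁻¹ : α ∈ B_n(M), 1 ≤ i ≤ n-1} ⊆ SB_n(M)`. -/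
def UpsHat (n g : ℕ) (ι : SurfBraidGroup n g →* SingBraidMonoid n g) :
    Set (SingBraidMonoid n g) :=
  { x | ∃ α : SurfBraidGroup n g, ∃ i : ℕ, 1 ≤ i ∧ i ≤ n - 1 ∧
      x = ι α * sδ n g i * ι α⁻¹ }

/-- The defining property of the desingularization map
`η : SB_n(M) → ℤ[B_n(M)]`: `η(σ_i^{±1}) = σ_i^{±1}`, `η(a_k^{±1}) = a_k^{±1}`,
`η(τ_i) = σ_i - σ_i⁻¹`. -/
def IsEta (n g : ℕ) (η : SingBraidMonoid n g →* MonoidAlgebra ℤ (SurfBraidGroup n g)) : Prop :=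
  (∀ i, 1 ≤ i → i ≤ n - 1 →
    η (sσ n g i) = MonoidAlgebra.of ℤ (SurfBraidGroup n g) (Bσ n g i) ∧
    η (sσi n g i) = MonoidAlgebra.of ℤ (SurfBraidGroup n g) ((Bσ n g i)⁻¹)) ∧
  (∀ k, 1 ≤ k → k ≤ 2 * g →
    η (sa n g k) = MonoidAlgebra.of ℤ (SurfBraidGroup n g) (Ba n g k) ∧
    η (sai n g k) = MonoidAlgebra.of ℤ (SurfBraidGroup n g) ((Ba n g k)⁻¹)) ∧
  (∀ i, 1 ≤ i → i ≤ n - 1 →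
    η (sτ n g i) = MonoidAlgebra.of ℤ (SurfBraidGroup n g) (Bσ n g i) -
      MonoidAlgebra.of ℤ (SurfBraidGroup n g) ((Bσ n g i)⁻¹))

/-- The defining property of `ν : M(Ω) → ℤ[K_n(M)]`: `ν(u) = u - 1` for every vertex `u ∈ Υ`. -/
def IsNu (n g : ℕ)
    (ν : GraphMonoid (commE (Ups n g)) →* MonoidAlgebra ℤ ↥(Ksub n g)) : Prop :=
  ∀ u : ↥(Ups n g),
    ν (gvert (commE (Ups n g)) u) =
      MonoidAlgebra.of ℤ ↥(Ksub n g) ⟨u.1, Subgroup.subset_closure u.2⟩ - 1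

/-- Every element of `Υ_{i j}` lies in `Υ`. -/
theorem upsIJ_subset_Ups (n g : ℕ) (θ : SurfBraidGroup n g →* Equiv.Perm (Fin n))
    (i j : ℕ) (h1 : 1 ≤ i) (h2 : i < j) (h3 : j ≤ n) (hn : 2 ≤ n) :
    UpsIJ n g θ i j ⊆ Ups n g := by
  rintro x ⟨β, _hβ, rfl⟩
  refine ⟨β * bmk n g (prodAsc (bS n g) i (j - 2)), j - 1, by omega, by omega, ?_⟩
  simp only [bT, Bσ, map_mul, map_pow, map_inv, mul_inv_rev]
  group

/-- Every element of `Υ_{i j}` lies in `K_n(M)`. -/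
theorem upsIJ_subset_Ksub (n g : ℕ) (θ : SurfBraidGroup n g →* Equiv.Perm (Fin n))
    (i j : ℕ) (h1 : 1 ≤ i) (h2 : i < j) (h3 : j ≤ n) (hn : 2 ≤ n) :
    ∀ u ∈ UpsIJ n g θ i j, u ∈ Ksub n g := fun _ hu =>
  Subgroup.subset_closure (upsIJ_subset_Ups n g θ i j h1 h2 h3 hn hu)

/-- The canonical monoid homomorphism out of a graph monoid induced by a map on vertices
whose values pairwise commute along edges. -/
def gmLift {X M : Type*} [Monoid M] (E : X → X → Prop) (f : X → M)
    (h : ∀ x y, E x y → f x * f y = f y * f x) : GraphMonoid E →* M :=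
  Con.lift _ (FreeMonoid.lift f) (by
    refine Con.conGen_le.2 ?_
    rintro w₁ w₂ ⟨x, y, hxy, rfl, rfl⟩
    show FreeMonoid.lift f _ = FreeMonoid.lift f _
    simp only [map_mul, FreeMonoid.lift_eval_of]
    exact h x y hxy)

/-! The first-occurrence argument: for non-adjacent vertices `a ≠ b`, deleting every other letter
is a well-defined map `M(Γ) → {a, b}*`, since the only defining relation it does not trivially
respect would be `ab = ba`. So the first letter among `{a, b}` in `x_1 ⋯ x_l` is `a = x_1`,
whereas in `y_1 ⋯ y_l` it is one of `y_1, …, y_i`, none of which is `a`, if `b = y_i`. -/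

section GraphMonoid

variable {X : Type*} {E : X → X → Prop}

theorem filter_eq_of_graphCon {p : X → Bool} (hp : ∀ x y, E x y → p x → ¬p y)
    {u w : FreeMonoid X} (h : graphCon E u w) :
    u.toList.filter p = w.toList.filter p := by
  induction h with
  | of u w huw =>
    obtain ⟨x, y, hxy, rfl, rfl⟩ := huw
    have hnot := hp x y hxy
    cases hx : p x <;> cases hy : p y <;> simp_all [FreeMonoid.toList_mul]
  | refl => rfl
  | symm _ ih => exact ih.symm
  | trans _ _ ih₁ ih₂ => exact ih₁.trans ih₂
  | mul _ _ ih₁ ih₂ => simp only [FreeMonoid.toList_mul, List.filter_append, ih₁, ih₂]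

theorem prod_map_gvert (L : List X) :
    (L.map (gvert E)).prod = (graphCon E).mk' (FreeMonoid.ofList L) := by
  induction L with
  | nil => simp
  | cons z L ih => simp [ih, FreeMonoid.ofList_cons, gvert]

theorem find?_eq_of_prod_gvert_eq {p : X → Bool} (hp : ∀ x y, E x y → p x → ¬p y)
    {L L' : List X} (h : (L.map (gvert E)).prod = (L'.map (gvert E)).prod) :
    L.find? p = L'.find? p := by
  rw [prod_map_gvert, prod_map_gvert] at h
  simpa only [FreeMonoid.toList_ofList, List.head?_filter] using
    congrArg List.head? (filter_eq_of_graphCon hp ((graphCon E).eq.mp h))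

end GraphMonoid

theorem List.find?_ne_some_of_getElem {α : Type*} {p : α → Bool} {l : List α} {a : α} {t : ℕ}
    (ht : t < l.length) (hpt : p l[t]) (hne : ∀ i (hi : i < l.length), i ≤ t → l[i] ≠ a) :
    l.find? p ≠ some a := by
  intro hfind
  obtain ⟨-, i, hi, rfl, hbefore⟩ := List.find?_eq_some_iff_getElem.mp hfind
  by_cases hit : i ≤ t
  · exact hne i hi hit rfl
  · simpa [hpt] using hbefore t (by omega)

theorem graph_monoid_commutation_general {X : Type*} (Γ : SimpleGraph X) (l : ℕ) (hl : 0 < l)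
    (x y : Fin l → X) (k : Fin l)
    (heq : (List.ofFn fun t => gvert Γ.Adj (x t)).prod =
      (List.ofFn fun t => gvert Γ.Adj (y t)).prod)
    (hne : ∀ t : Fin l, t < k → y t ≠ x ⟨0, hl⟩) :
    ∀ t : Fin l, t < k → Γ.Adj (y t) (x ⟨0, hl⟩) := by
  classical
  intro t ht
  by_contra hadj
  set a := x ⟨0, hl⟩
  let p : X → Bool := fun z => decide (z = a ∨ z = y t)
  have hindep : ∀ u v, Γ.Adj u v → p u → ¬p v := by
    rintro u v huv hu hv
    simp only [p, decide_eq_true_eq] at hu hv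
    rcases hu with rfl | rfl <;> rcases hv with rfl | rfl
    exacts [huv.ne rfl, hadj huv.symm, hadj huv, huv.ne rfl]
  have hfind : (List.ofFn x).find? p = (List.ofFn y).find? p :=
    find?_eq_of_prod_gvert_eq hindep (by simpa only [List.map_ofFn, Function.comp_def] using heq)
  have hx : (List.ofFn x).find? p = some a := by
    obtain ⟨m, rfl⟩ : ∃ m, l = m + 1 := ⟨l - 1, by omega⟩
    simp [List.ofFn_succ, p, a]
  refine List.find?_ne_some_of_getElem (t := t) (by simp) (by simp [p]) ?_ (hx ▸ hfind.symm)
  intro i hi hit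
  simpa using hne ⟨i, by simpa using hi⟩ (lt_of_le_of_lt hit ht)

/-- If `x_1 ⋯ x_l = y_1 ⋯ y_l` in the graph monoid `M(Γ)`, `y_k = x_1`, and `y_i ≠ x_1` for
`i < k`, then `{y_i, x_1}` is an edge of `Γ` for all `i < k`. -/
theorem graph_monoid_commutation {X : Type*} (Γ : SimpleGraph X) (l : ℕ) (hl : 0 < l)
    (x y : Fin l → X) (k : Fin l)
    (heq : (List.ofFn fun t => gvert Γ.Adj (x t)).prod =
      (List.ofFn fun t => gvert Γ.Adj (y t)).prod)
    (hk : y k = x ⟨0, hl⟩)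
    (hne : ∀ t : Fin l, t < k → y t ≠ x ⟨0, hl⟩) :
    ∀ t : Fin l, t < k → Γ.Adj (y t) (x ⟨0, hl⟩) :=
  graph_monoid_commutation_general Γ l hl x y k heq hne
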